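/- Let ψ : 𝔻 → Ω be a conformal homeomorphism, 1 ≤ q < p < ∞, and suppose K := (∬_𝔻 |ψ'(u,v)|^{(p−2)q/(p−q)} dudv)^{(p−q)/(pq)} < ∞. Then for every f ∈ C¹(Ω) ∩ L^{1,p}(Ω), the composition g = f ∘ ψ satisfies ‖∇g‖_{L^q(𝔻)} ≤ K · ‖∇f‖_{L^p(Ω)}. -/

import Mathlib

/-!
A conformal map ψ stretches every direction by |ψ'|, so |∇(f ∘ ψ)| ≤ |∇f ∘ ψ| |ψ'|, and its real
Jacobian is |ψ'|². Splitting (|∇f ∘ ψ| |ψ'|)^q = (|∇f ∘ ψ|^q |ψ'|^{2q/p}) · |ψ'|^{q - 2q/p} and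
applying Hölder's inequality with exponents p/q and p/(p-q), the first factor contributes
∫_𝔻 |∇f ∘ ψ|^p |ψ'|² = ∫_Ω |∇f|^p by the change of variables formula, and the second one the
integral defining K.
-/

open MeasureTheory Metric Set Filter Topology

theorem Complex.det_restrictScalars_smulRight_one (c : ℂ) :
    (((1 : ℂ →L[ℂ] ℂ).smulRight c).restrictScalars ℝ).det = Complex.normSq c := by
  simp [ContinuousLinearMap.det, LinearMap.det_restrictScalars, Algebra.norm_complex_eq]

theorem Complex.abs_det_restrictScalars_smulRight_one (c : ℂ) :
    |(((1 : ℂ →L[ℂ] ℂ).smulRight c).restrictScalars ℝ).det| = ‖c‖ ^ 2 := by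
  rw [Complex.det_restrictScalars_smulRight_one, Complex.normSq_eq_norm_sq,
    abs_of_nonneg (sq_nonneg _)]

section ChangeOfVariables

variable {E : Type*} [NormedAddCommGroup E] [NormedSpace ℝ E] {s : Set ℂ} {ψ : ℂ → ℂ}

theorem hasFDerivWithinAt_restrictScalars_of_differentiableAt
    (hψ : ∀ w ∈ s, DifferentiableAt ℂ ψ w) :
    ∀ w ∈ s, HasFDerivWithinAt ψ
      (((1 : ℂ →L[ℂ] ℂ).smulRight (deriv ψ w)).restrictScalars ℝ) s w := fun w hw =>
  ((hψ w hw).hasDerivAt.hasFDerivAt.restrictScalars ℝ).hasFDerivWithinAt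

theorem integrableOn_image_iff_integrableOn_norm_deriv_sq_smul (hs : MeasurableSet s)
    (hψ : ∀ w ∈ s, DifferentiableAt ℂ ψ w) (hinj : InjOn ψ s) (g : ℂ → E) :
    IntegrableOn g (ψ '' s) ↔ IntegrableOn (fun w => ‖deriv ψ w‖ ^ 2 • g (ψ w)) s := by
  simp_rw [integrableOn_image_iff_integrableOn_abs_det_fderiv_smul volume hs
    (hasFDerivWithinAt_restrictScalars_of_differentiableAt hψ) hinj,
    Complex.abs_det_restrictScalars_smulRight_one]

theorem integral_image_eq_integral_norm_deriv_sq_smul [CompleteSpace E] (hs : MeasurableSet s)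
    (hψ : ∀ w ∈ s, DifferentiableAt ℂ ψ w) (hinj : InjOn ψ s) (g : ℂ → E) :
    ∫ x in ψ '' s, g x = ∫ w in s, ‖deriv ψ w‖ ^ 2 • g (ψ w) := by
  simp_rw [integral_image_eq_integral_abs_det_fderiv_smul volume hs
    (hasFDerivWithinAt_restrictScalars_of_differentiableAt hψ) hinj,
    Complex.abs_det_restrictScalars_smulRight_one]

end ChangeOfVariables

theorem norm_fderiv_comp_le {E : Type*} [NormedAddCommGroup E] [NormedSpace ℝ E]
    {f : ℂ → E} {ψ : ℂ → ℂ} {w : ℂ} (hf : DifferentiableAt ℝ f (ψ w))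
    (hψ : DifferentiableAt ℂ ψ w) :
    ‖fderiv ℝ (f ∘ ψ) w‖ ≤ ‖fderiv ℝ f (ψ w)‖ * ‖deriv ψ w‖ := by
  rw [(hf.hasFDerivAt.comp w (hψ.hasDerivAt.hasFDerivAt.restrictScalars ℝ)).fderiv]
  refine (ContinuousLinearMap.opNorm_comp_le _ _).trans_eq ?_
  simp

theorem DifferentiableOn.isOpen_image_of_injOn {U : Set ℂ} {ψ : ℂ → ℂ}
    (hψ : DifferentiableOn ℂ ψ U) (hU : IsOpen U) (hinj : InjOn ψ U) : IsOpen (ψ '' U) := by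
  rw [isOpen_iff_mem_nhds]
  rintro _ ⟨z, hz, rfl⟩
  rcases (hψ.analyticAt (hU.mem_nhds hz)).eventually_constant_or_nhds_le_map_nhds with
    hconst | hopen
  · obtain ⟨w, ⟨hw, hwU⟩, hwz⟩ :=
      (((hconst.and (hU.mem_nhds hz)).filter_mono nhdsWithin_le_nhds).and
        (self_mem_nhdsWithin : {z}ᶜ ∈ 𝓝[≠] z)).exists
    exact (hwz (hinj hwU hz hw)).elim
  · exact hopen (image_mem_map (hU.mem_nhds hz))

theorem memLp_ofReal_of_integrable_rpow {α : Type*} [MeasurableSpace α] {μ : Measure α}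
    {h : α → ℝ} {r : ℝ} (hr : 0 < r) (hm : AEStronglyMeasurable h μ) (h0 : ∀ x, 0 ≤ h x)
    (hint : Integrable (fun x => h x ^ r) μ) : MemLp h (ENNReal.ofReal r) μ := by
  rw [← integrable_norm_rpow_iff hm (by simpa using hr) ENNReal.ofReal_ne_top,
    ENNReal.toReal_ofReal hr.le]
  simpa only [Real.norm_of_nonneg (h0 _)] using hint

section WeightedFactors

variable {x y p q n : ℝ}

theorem Real.mul_rpow_eq_weighted_factors (hx : 0 ≤ x) (hy : 0 ≤ y) (hq : q ≠ 0) :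
    (y * x) ^ q = (x ^ (n * q / p) * y ^ q) * x ^ (q - n * q / p) := by
  rw [Real.mul_rpow hy hx, mul_comm (x ^ _), mul_assoc, ← Real.rpow_add' hx (by simpa using hq)]
  ring_nf

theorem Real.weighted_factor_left_rpow (hx : 0 ≤ x) (hy : 0 ≤ y) (hp : p ≠ 0) (hq : q ≠ 0) :
    (x ^ (n * q / p) * y ^ q) ^ (p / q) = x ^ n * y ^ p := by
  rw [Real.mul_rpow (by positivity) (by positivity), ← Real.rpow_mul hx, ← Real.rpow_mul hy]
  field_simp

theorem Real.weighted_factor_right_rpow (hx : 0 ≤ x) (hp : p ≠ 0) (hqp : q ≠ p) :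
    (x ^ (q - n * q / p)) ^ (p / (p - q)) = x ^ ((p - n) * q / (p - q)) := by
  rw [← Real.rpow_mul hx]
  congr 1
  field_simp [sub_ne_zero.2 hqp.symm]

theorem Real.holderConjugate_div_div_sub (hq : 0 < q) (hqp : q < p) :
    (p / q).HolderConjugate (p / (p - q)) := by
  have hp : 0 < p := hq.trans hqp
  rw [Real.holderConjugate_iff, inv_div, inv_div]
  refine ⟨(one_lt_div hq).2 hqp, ?_⟩
  field_simp
  ring

end WeightedFactors

section WeightedHolder

variable {α : Type*} [MeasurableSpace α] {μ : Measure α} {g d : α → ℝ} {p q n : ℝ}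

theorem memLp_weighted_factors (hq : 0 < q) (hqp : q < p)
    (hg : AEMeasurable g μ) (hd : AEMeasurable d μ) (hg0 : ∀ x, 0 ≤ g x) (hd0 : ∀ x, 0 ≤ d x)
    (hgd : Integrable (fun x => d x ^ n * g x ^ p) μ)
    (hd_int : Integrable (fun x => d x ^ ((p - n) * q / (p - q))) μ) :
    MemLp (fun x => d x ^ (n * q / p) * g x ^ q) (ENNReal.ofReal (p / q)) μ ∧
      MemLp (fun x => d x ^ (q - n * q / p)) (ENNReal.ofReal (p / (p - q))) μ := by
  have hp : 0 < p := hq.trans hqp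
  constructor
  · refine memLp_ofReal_of_integrable_rpow (div_pos hp hq) (by fun_prop)
      (fun x => mul_nonneg (Real.rpow_nonneg (hd0 x) _) (Real.rpow_nonneg (hg0 x) _)) ?_
    simpa only [Real.weighted_factor_left_rpow (hd0 _) (hg0 _) hp.ne' hq.ne'] using hgd
  · refine memLp_ofReal_of_integrable_rpow (div_pos hp (sub_pos.2 hqp))
      (hd.pow_const _).aestronglyMeasurable
      (fun x => Real.rpow_nonneg (hd0 x) _) ?_
    simpa only [Real.weighted_factor_right_rpow (hd0 _) hp.ne' hqp.ne] using hd_int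

theorem integrable_mul_rpow_of_weighted (hq : 0 < q) (hqp : q < p)
    (hg : AEMeasurable g μ) (hd : AEMeasurable d μ) (hg0 : ∀ x, 0 ≤ g x) (hd0 : ∀ x, 0 ≤ d x)
    (hgd : Integrable (fun x => d x ^ n * g x ^ p) μ)
    (hd_int : Integrable (fun x => d x ^ ((p - n) * q / (p - q))) μ) :
    Integrable (fun x => (g x * d x) ^ q) μ := by
  obtain ⟨ha, hb⟩ := memLp_weighted_factors hq hqp hg hd hg0 hd0 hgd hd_int
  have := (Real.holderConjugate_div_div_sub hq hqp).ennrealOfReal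
  refine (ha.integrable_mul hb).congr (ae_of_all _ fun x => ?_)
  exact (Real.mul_rpow_eq_weighted_factors (hd0 x) (hg0 x) hq.ne').symm

theorem rpow_integral_rpow_le_of_le {F G : α → ℝ} (hq : 0 < q) (hF0 : ∀ x, 0 ≤ F x)
    (hG : Integrable (fun x => G x ^ q) μ) (hFG : ∀ᵐ x ∂μ, F x ≤ G x) :
    (∫ x, F x ^ q ∂μ) ^ (1 / q) ≤ (∫ x, G x ^ q ∂μ) ^ (1 / q) := by
  refine Real.rpow_le_rpow (integral_nonneg fun x => Real.rpow_nonneg (hF0 x) _) ?_ (by positivity)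
  refine integral_mono_of_nonneg (ae_of_all _ fun x => Real.rpow_nonneg (hF0 x) _) hG ?_
  filter_upwards [hFG] with x hx
  exact Real.rpow_le_rpow (hF0 x) hx hq.le

theorem rpow_integral_mul_rpow_le_of_weighted (hq : 0 < q) (hqp : q < p)
    (hg : AEMeasurable g μ) (hd : AEMeasurable d μ) (hg0 : ∀ x, 0 ≤ g x) (hd0 : ∀ x, 0 ≤ d x)
    (hgd : Integrable (fun x => d x ^ n * g x ^ p) μ)
    (hd_int : Integrable (fun x => d x ^ ((p - n) * q / (p - q))) μ) :
    (∫ x, (g x * d x) ^ q ∂μ) ^ (1 / q) ≤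
      (∫ x, d x ^ ((p - n) * q / (p - q)) ∂μ) ^ ((p - q) / (p * q)) *
        (∫ x, d x ^ n * g x ^ p ∂μ) ^ (1 / p) := by
  have hp : 0 < p := hq.trans hqp
  obtain ⟨ha, hb⟩ := memLp_weighted_factors hq hqp hg hd hg0 hd0 hgd hd_int
  have holder := integral_mul_le_Lp_mul_Lq_of_nonneg (Real.holderConjugate_div_div_sub hq hqp)
    (ae_of_all _ fun x => mul_nonneg (Real.rpow_nonneg (hd0 x) _) (Real.rpow_nonneg (hg0 x) _))
    (ae_of_all _ fun x => Real.rpow_nonneg (hd0 x) _) ha hb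
  simp only [← Real.mul_rpow_eq_weighted_factors (hd0 _) (hg0 _) hq.ne',
    Real.weighted_factor_left_rpow (hd0 _) (hg0 _) hp.ne' hq.ne',
    Real.weighted_factor_right_rpow (hd0 _) hp.ne' hqp.ne, one_div_div] at holder
  have hI : 0 ≤ ∫ x, d x ^ n * g x ^ p ∂μ :=
    integral_nonneg fun x => mul_nonneg (Real.rpow_nonneg (hd0 x) _) (Real.rpow_nonneg (hg0 x) _)
  have hJ : 0 ≤ ∫ x, d x ^ ((p - n) * q / (p - q)) ∂μ :=
    integral_nonneg fun x => Real.rpow_nonneg (hd0 x) _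
  calc (∫ x, (g x * d x) ^ q ∂μ) ^ (1 / q)
      ≤ ((∫ x, d x ^ n * g x ^ p ∂μ) ^ (q / p) *
          (∫ x, d x ^ ((p - n) * q / (p - q)) ∂μ) ^ ((p - q) / p)) ^ (1 / q) :=
        Real.rpow_le_rpow (integral_nonneg fun x => Real.rpow_nonneg
          (mul_nonneg (hg0 x) (hd0 x)) _) holder (by positivity)
    _ = _ := by
        rw [Real.mul_rpow (by positivity) (by positivity), ← Real.rpow_mul hI,
          ← Real.rpow_mul hJ, mul_comm]
        congr 2 <;> field_simp

end WeightedHolder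

/-- Composition operator on homogeneous Sobolev spaces induced by a conformal
map ψ : 𝔻 → Ω (Theorem 3.4): for 1 ≤ q < p < ∞ and
K = (∬_𝔻 |ψ'|^{(p−2)q/(p−q)})^{(p−q)/(pq)} < ∞ one has
‖∇(f∘ψ)‖_{L^q(𝔻)} ≤ K ‖∇f‖_{L^p(Ω)}. -/
theorem stmt15 (Ω : Set ℂ) (ψ : ℂ → ℂ)
    (hψd : DifferentiableOn ℂ ψ (ball (0:ℂ) 1))
    (hψbij : Set.BijOn ψ (ball (0:ℂ) 1) Ω)
    (p q : ℝ) (hq : 1 ≤ q) (hqp : q < p)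
    (K : ℝ)
    (hKdef : K = (∫ w in ball (0:ℂ) 1,
        ‖deriv ψ w‖ ^ ((p - 2) * q / (p - q))) ^ ((p - q) / (p * q)))
    (hKint : IntegrableOn
        (fun w => ‖deriv ψ w‖ ^ ((p - 2) * q / (p - q))) (ball (0:ℂ) 1))
    (f : ℂ → ℝ) (hf : ContDiffOn ℝ 1 f Ω)
    (hfp : IntegrableOn (fun x => ‖fderiv ℝ f x‖ ^ p) Ω) :
    (∫ w in ball (0:ℂ) 1, ‖fderiv ℝ (f ∘ ψ) w‖ ^ q) ^ (1 / q) ≤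
      K * (∫ x in Ω, ‖fderiv ℝ f x‖ ^ p) ^ (1 / p) := by
  have hq0 : 0 < q := zero_lt_one.trans_le hq
  have hψ : ∀ w ∈ ball (0:ℂ) 1, DifferentiableAt ℂ ψ w := fun w hw =>
    hψd.differentiableAt (isOpen_ball.mem_nhds hw)
  obtain rfl : ψ '' ball 0 1 = Ω := hψbij.image_eq
  have hΩ : IsOpen (ψ '' ball 0 1) := hψd.isOpen_image_of_injOn isOpen_ball hψbij.injOn
  have hchain : ∀ w ∈ ball (0:ℂ) 1,
      ‖fderiv ℝ (f ∘ ψ) w‖ ≤ ‖fderiv ℝ f (ψ w)‖ * ‖deriv ψ w‖ := fun w hw =>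
    norm_fderiv_comp_le ((hf.contDiffAt (hΩ.mem_nhds (mem_image_of_mem ψ hw))).differentiableAt
      one_ne_zero) (hψ w hw)
  rw [integral_image_eq_integral_norm_deriv_sq_smul measurableSet_ball hψ hψbij.injOn]
  rw [integrableOn_image_iff_integrableOn_norm_deriv_sq_smul measurableSet_ball hψ
    hψbij.injOn] at hfp
  have hg : AEMeasurable (fun w => ‖fderiv ℝ f (ψ w)‖) (volume.restrict (ball (0:ℂ) 1)) :=
    (measurable_fderiv ℝ f).norm.comp_aemeasurable
      (hψd.continuousOn.aemeasurable measurableSet_ball)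
  have hd : AEMeasurable (fun w => ‖deriv ψ w‖) (volume.restrict (ball (0:ℂ) 1)) :=
    (measurable_deriv ψ).norm.aemeasurable
  have hfp_ball :
      IntegrableOn (fun w => ‖deriv ψ w‖ ^ (2:ℝ) * ‖fderiv ℝ f (ψ w)‖ ^ p) (ball 0 1) := by
    simpa only [Real.rpow_two, smul_eq_mul] using hfp
  calc (∫ w in ball (0:ℂ) 1, ‖fderiv ℝ (f ∘ ψ) w‖ ^ q) ^ (1 / q)
      ≤ (∫ w in ball (0:ℂ) 1, (‖fderiv ℝ f (ψ w)‖ * ‖deriv ψ w‖) ^ q) ^ (1 / q) :=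
        rpow_integral_rpow_le_of_le hq0 (fun _ => norm_nonneg _)
          (integrable_mul_rpow_of_weighted hq0 hqp hg hd (fun _ => norm_nonneg _)
            (fun _ => norm_nonneg _) hfp_ball hKint)
          ((ae_restrict_iff' measurableSet_ball).2 (ae_of_all _ hchain))
    _ ≤ K * (∫ w in ball (0:ℂ) 1, ‖deriv ψ w‖ ^ (2:ℝ) * ‖fderiv ℝ f (ψ w)‖ ^ p) ^ (1 / p) :=
        hKdef ▸ rpow_integral_mul_rpow_le_of_weighted hq0 hqp hg hd (fun _ => norm_nonneg _)
          (fun _ => norm_nonneg _) hfp_ball hKint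
    _ = _ := by simp only [Real.rpow_two, smul_eq_mul]
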